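/- arXiv:2310.13722 — 2 statements merged into one kernel-verified Lean document; each statement's English description precedes it below -/
import Mathlib

section
/- Let V be a real vector space equipped with two inner products ⟨·,·⟩₁ and ⟨·,·⟩₂, and fix θ₀ ∈ (0,π). Suppose the two inner products define the same θ₀ angle, i.e., for all nonzero x, y ∈ V, ⟨x,y⟩₁ = cos(θ₀)·‖x‖₁‖y‖₁ if and only if ⟨x,y⟩₂ = cos(θ₀)·‖x‖₂‖y‖₂. Then there exists a constant c > 0 such that ⟨x,y⟩₂ = c·⟨x,y⟩₁ for all x, y ∈ V. -/
/-!
Preserving the angle `θ₀` forces preserving orthogonality. If `x ⊥₁ y` with `‖x‖₁ = ‖y‖₁`, the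
vectors `z± = cos θ₀ • x ± sin θ₀ • y` make the angle `θ₀` with `x` for `⟨·,·⟩₁`, hence for
`⟨·,·⟩₂`. Squaring these two identities and subtracting leaves
`cos θ₀ sin³ θ₀ ‖x‖₂² ⟨x, y⟩₂ = 0`, and when `cos θ₀ = 0` either identity alone gives
`sin² θ₀ ⟨x, y⟩₂² = 0`.

Since `x + y ⊥ x - y` exactly when `‖x‖ = ‖y‖`, preserving orthogonality means preserving equality
of lengths. Rescaling any `x` to the length of a fixed `e ≠ 0` then gives
`‖x‖₂² = c ‖x‖₁²` with `c = ‖e‖₂² / ‖e‖₁²`, and polarization extends this to `⟨·,·⟩₂ = c ⟨·,·⟩₁`.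
-/

namespace InnerProductSpace.Core

variable {V : Type*} [AddCommGroup V] [Module ℝ V]

section Real

/- `InnerProductSpace.Core` is a class, so once two of them are in context Mathlib's lemmas about
it may pick the wrong one by instance search; these restatements take the core explicitly. -/

variable (p : InnerProductSpace.Core ℝ V)

theorem real_inner_comm (x y : V) : p.inner x y = p.inner y x := by
  simpa using p.conj_inner_symm y x

theorem real_inner_smul_left (r : ℝ) (x y : V) : p.inner (r • x) y = r * p.inner x y := by
  simp [inner_smul_left]

theorem real_inner_smul_right (r : ℝ) (x y : V) : p.inner x (r • y) = r * p.inner x y := by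
  simp [inner_smul_right]

theorem real_inner_add_right (x y z : V) : p.inner x (y + z) = p.inner x y + p.inner x z :=
  inner_add_right x y z

theorem real_inner_zero_left (x : V) : p.inner 0 x = 0 :=
  inner_zero_left x

theorem real_inner_neg_neg (x : V) : p.inner (-x) (-x) = p.inner x x := by
  rw [inner_neg_left, inner_neg_right, neg_neg]

theorem real_inner_self_ne_zero {x : V} : p.inner x x ≠ 0 ↔ x ≠ 0 :=
  inner_self_ne_zero

theorem real_inner_self_nonneg (x : V) : 0 ≤ p.inner x x := by
  simpa using p.re_inner_nonneg x

theorem real_inner_self_pos {x : V} (hx : x ≠ 0) : 0 < p.inner x x :=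
  (p.real_inner_self_nonneg x).lt_of_ne' (p.real_inner_self_ne_zero.mpr hx)

theorem real_inner_smul_self (r : ℝ) (x : V) : p.inner (r • x) (r • x) = r ^ 2 * p.inner x x := by
  rw [real_inner_smul_left, real_inner_smul_right, ← mul_assoc, ← sq]

theorem real_inner_add_sub_self (x y : V) :
    p.inner (x + y) (x - y) = p.inner x x - p.inner y y := by
  rw [inner_add_left, inner_sub_right, inner_sub_right, p.real_inner_comm y x]
  ring

theorem real_inner_add_add_self (x y : V) :
    p.inner (x + y) (x + y) = p.inner x x + 2 * p.inner x y + p.inner y y := by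
  rw [inner_add_add_self, p.real_inner_comm y x]
  ring

theorem real_inner_smul_add_smul_self (a b : ℝ) (x y : V) :
    p.inner (a • x + b • y) (a • x + b • y) =
      a ^ 2 * p.inner x x + 2 * a * b * p.inner x y + b ^ 2 * p.inner y y := by
  simp only [real_inner_add_add_self, real_inner_smul_left, real_inner_smul_right]
  ring

def HasAngle (θ : ℝ) (x y : V) : Prop :=
  p.inner x y = Real.cos θ * (Real.sqrt (p.inner x x) * Real.sqrt (p.inner y y))

variable {p}

theorem HasAngle.inner_sq {θ : ℝ} {x y : V} (h : p.HasAngle θ x y) :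
    p.inner x y ^ 2 = Real.cos θ ^ 2 * (p.inner x x * p.inner y y) := by
  rw [h, mul_pow, mul_pow, Real.sq_sqrt (p.real_inner_self_nonneg x),
    Real.sq_sqrt (p.real_inner_self_nonneg y)]

theorem inner_self_cos_smul_add_smul {θ σ : ℝ} {x y : V} (hxy : p.inner x y = 0)
    (hxx : p.inner x x = p.inner y y) (hσ : σ ^ 2 = Real.sin θ ^ 2) :
    p.inner (Real.cos θ • x + σ • y) (Real.cos θ • x + σ • y) = p.inner x x := by
  rw [real_inner_smul_add_smul_self, hxy, ← hxx, hσ]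
  linear_combination p.inner x x * Real.cos_sq_add_sin_sq θ

theorem hasAngle_cos_smul_add_smul {θ σ : ℝ} {x y : V} (hxy : p.inner x y = 0)
    (hxx : p.inner x x = p.inner y y) (hσ : σ ^ 2 = Real.sin θ ^ 2) :
    p.HasAngle θ x (Real.cos θ • x + σ • y) := by
  rw [HasAngle, inner_self_cos_smul_add_smul hxy hxx hσ,
    Real.mul_self_sqrt (p.real_inner_self_nonneg x), real_inner_add_right, real_inner_smul_right,
    real_inner_smul_right, hxy]
  ring

end Real

variable {p₁ p₂ : InnerProductSpace.Core ℝ V}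

theorem inner_eq_zero_of_hasAngle_imp_of_inner_self_eq {θ : ℝ} (hθ : Real.sin θ ≠ 0)
    (h : ∀ x y : V, x ≠ 0 → y ≠ 0 → p₁.HasAngle θ x y → p₂.HasAngle θ x y)
    {x y : V} (hx : x ≠ 0) (hxy : p₁.inner x y = 0) (hxx : p₁.inner x x = p₁.inner y y) :
    p₂.inner x y = 0 := by
  set k := Real.cos θ
  set s := Real.sin θ
  have rotate : ∀ σ : ℝ, σ ^ 2 = s ^ 2 →
      (k * p₂.inner x x + σ * p₂.inner x y) ^ 2 = k ^ 2 * (p₂.inner x x *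
        (k ^ 2 * p₂.inner x x + 2 * k * σ * p₂.inner x y + σ ^ 2 * p₂.inner y y)) := by
    intro σ hσ
    have hz : k • x + σ • y ≠ 0 := p₁.real_inner_self_ne_zero.mp <| by
      rw [inner_self_cos_smul_add_smul hxy hxx hσ]
      exact p₁.real_inner_self_ne_zero.mpr hx
    have := (h x _ hx hz (hasAngle_cos_smul_add_smul hxy hxx hσ)).inner_sq
    rwa [real_inner_smul_add_smul_self, real_inner_add_right, real_inner_smul_right,
      real_inner_smul_right] at this
  have hplus := rotate s rfl
  have hminus := rotate (-s) (neg_sq s)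
  have hpos := p₂.real_inner_self_pos hx
  have hks : k ^ 2 + s ^ 2 = 1 := Real.cos_sq_add_sin_sq θ
  rcases eq_or_ne k 0 with hk | hk
  · have : (s * p₂.inner x y) ^ 2 = 0 := by simpa [hk] using hplus
    simpa [hθ] using this
  · have : (4 * k * s ^ 3 * p₂.inner x x) * p₂.inner x y = 0 := by
      linear_combination hplus - hminus + 4 * k * s * p₂.inner x x * p₂.inner x y * hks
    simpa [hk, hθ, hpos.ne'] using this

theorem inner_eq_zero_of_hasAngle_imp {θ : ℝ} (hθ : Real.sin θ ≠ 0)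
    (h : ∀ x y : V, x ≠ 0 → y ≠ 0 → p₁.HasAngle θ x y → p₂.HasAngle θ x y)
    {x y : V} (hx : x ≠ 0) (hy : y ≠ 0) (hxy : p₁.inner x y = 0) : p₂.inner x y = 0 := by
  have ha := Real.sqrt_pos.mpr (p₁.real_inner_self_pos hx)
  have hb := Real.sqrt_pos.mpr (p₁.real_inner_self_pos hy)
  have := inner_eq_zero_of_hasAngle_imp_of_inner_self_eq hθ h
    (x := Real.sqrt (p₁.inner y y) • x) (y := Real.sqrt (p₁.inner x x) • y)
    (smul_ne_zero hb.ne' hx) (by simp [real_inner_smul_left, real_inner_smul_right, hxy])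
    (by simp only [real_inner_smul_self, Real.sq_sqrt (p₁.real_inner_self_nonneg _)]; ring)
  simpa [real_inner_smul_left, real_inner_smul_right, ha.ne', hb.ne'] using this

theorem inner_self_eq_of_inner_eq_zero_imp
    (h : ∀ x y : V, x ≠ 0 → y ≠ 0 → p₁.inner x y = 0 → p₂.inner x y = 0)
    {x y : V} (hxy : p₁.inner x x = p₁.inner y y) : p₂.inner x x = p₂.inner y y := by
  rcases eq_or_ne (x + y) 0 with hadd | hadd
  · rw [eq_neg_of_add_eq_zero_right hadd, real_inner_neg_neg]
  rcases eq_or_ne (x - y) 0 with hsub | hsub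
  · rw [sub_eq_zero.mp hsub]
  have := h _ _ hadd hsub (by rw [real_inner_add_sub_self, hxy, sub_self])
  rwa [real_inner_add_sub_self, sub_eq_zero] at this

theorem exists_inner_self_eq_mul_of_inner_self_eq_imp
    (h : ∀ x y : V, p₁.inner x x = p₁.inner y y → p₂.inner x x = p₂.inner y y) :
    ∃ c : ℝ, 0 < c ∧ ∀ x : V, p₂.inner x x = c * p₁.inner x x := by
  by_cases hV : ∀ e : V, e = 0
  · exact ⟨1, one_pos, fun x => by simp [hV x, real_inner_zero_left]⟩
  push Not at hV
  obtain ⟨e, he⟩ := hV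
  have he₁ := p₁.real_inner_self_pos he
  refine ⟨p₂.inner e e / p₁.inner e e, div_pos (p₂.real_inner_self_pos he) he₁, fun x => ?_⟩
  rcases eq_or_ne x 0 with rfl | hx
  · simp [real_inner_zero_left]
  have hx₁ := p₁.real_inner_self_pos hx
  set t := Real.sqrt (p₁.inner e e / p₁.inner x x)
  have ht : t ^ 2 = p₁.inner e e / p₁.inner x x := Real.sq_sqrt (by positivity)
  have := h (t • x) e (by rw [real_inner_smul_self, ht]; field_simp)
  rw [real_inner_smul_self, ht] at this
  field_simp at this ⊢
  linear_combination this

theorem inner_eq_mul_of_inner_self_eq_mul {c : ℝ} (h : ∀ x : V, p₂.inner x x = c * p₁.inner x x)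
    (x y : V) : p₂.inner x y = c * p₁.inner x y := by
  have hxy := h (x + y)
  rw [real_inner_add_add_self, real_inner_add_add_self, h x, h y] at hxy
  linear_combination hxy / 2

end InnerProductSpace.Core

open InnerProductSpace.Core in
/-- Two real inner products defining the same `θ₀ ∈ (0, π)` angle are conformal. -/
theorem stmt_7 {V : Type*} [AddCommGroup V] [Module ℝ V]
    (p₁ p₂ : InnerProductSpace.Core ℝ V) (θ₀ : ℝ)
    (hθ₀ : θ₀ ∈ Set.Ioo 0 Real.pi)
    (h : ∀ x y : V, x ≠ 0 → y ≠ 0 →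
      (p₁.inner x y =
        Real.cos θ₀ * (Real.sqrt (p₁.inner x x) * Real.sqrt (p₁.inner y y)) ↔
       p₂.inner x y =
        Real.cos θ₀ * (Real.sqrt (p₂.inner x x) * Real.sqrt (p₂.inner y y)))) :
    ∃ c : ℝ, 0 < c ∧ ∀ x y : V, p₂.inner x y = c * p₁.inner x y := by
  have hsin : Real.sin θ₀ ≠ 0 := (Real.sin_pos_of_pos_of_lt_pi hθ₀.1 hθ₀.2).ne'
  have horth : ∀ x y : V, x ≠ 0 → y ≠ 0 → p₁.inner x y = 0 → p₂.inner x y = 0 :=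
    fun x y hx hy => inner_eq_zero_of_hasAngle_imp hsin (fun x y hx hy => (h x y hx hy).mp) hx hy
  obtain ⟨c, hc, hself⟩ := exists_inner_self_eq_mul_of_inner_self_eq_imp
    fun x y => inner_self_eq_of_inner_eq_zero_imp horth
  exact ⟨c, hc, inner_eq_mul_of_inner_self_eq_mul hself⟩
end

section
/- Let V be a complex vector space equipped with two inner products ⟨·,·⟩₁ and ⟨·,·⟩₂. Suppose the two inner products define the same angles for all pairs of nonzero vectors, i.e., for all nonzero x, y ∈ V, Re⟨x,y⟩₁/(‖x‖₁‖y‖₁) = Re⟨x,y⟩₂/(‖x‖₂‖y‖₂). Then there exists a constant c > 0 such that ⟨x,y⟩₂ = c·⟨x,y⟩₁ for all x, y ∈ V. -/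
/-!
Equal angles force the two inner products to have the same real orthogonality relation.
Since `Re⟪x + y, x - y⟫ = ‖x‖² - ‖y‖²`, vectors of equal `‖·‖₁`-length have equal
`‖·‖₂`-length, and rescaling shows that `‖x‖₂² / ‖x‖₁²` is a constant `c`.
Polarization gives `Re⟪x, y⟫₂ = c Re⟪x, y⟫₁`, and `Im⟪x, y⟫ = -Re⟪x, I • y⟫` upgrades this to
`⟪x, y⟫₂ = c ⟪x, y⟫₁`.
-/

open RCLike

namespace PreInnerProductSpace.Core

variable {𝕜 F : Type*} [RCLike 𝕜] [AddCommGroup F] [Module 𝕜 F]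

section

variable (p : PreInnerProductSpace.Core 𝕜 F)

/- Mathlib states these for a core given as an instance; with two cores on the same space we
need them for an explicit one. -/

theorem inner_zero_left (x : F) : p.inner 0 x = 0 :=
  @InnerProductSpace.Core.inner_zero_left 𝕜 F _ _ _ p x

theorem inner_zero_right (x : F) : p.inner x 0 = 0 :=
  @InnerProductSpace.Core.inner_zero_right 𝕜 F _ _ _ p x

theorem inner_add_right (x y z : F) : p.inner x (y + z) = p.inner x y + p.inner x z :=
  @InnerProductSpace.Core.inner_add_right 𝕜 F _ _ _ p x y z

theorem inner_sub_right (x y z : F) : p.inner x (y - z) = p.inner x y - p.inner x z :=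
  @InnerProductSpace.Core.inner_sub_right 𝕜 F _ _ _ p x y z

theorem inner_smul_right (x y : F) (r : 𝕜) : p.inner x (r • y) = r * p.inner x y :=
  @InnerProductSpace.Core.inner_smul_right 𝕜 F _ _ _ p x y r

theorem inner_re_symm (x y : F) : re (p.inner x y) = re (p.inner y x) :=
  @InnerProductSpace.Core.inner_re_symm 𝕜 F _ _ _ p x y

theorem re_inner_add_add_self (x y : F) :
    re (p.inner (x + y) (x + y)) =
      re (p.inner x x) + 2 * re (p.inner x y) + re (p.inner y y) := by
  rw [p.add_left, inner_add_right, inner_add_right, map_add, map_add, map_add,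
    p.inner_re_symm y x]
  ring

theorem re_inner_add_sub (x y : F) :
    re (p.inner (x + y) (x - y)) = re (p.inner x x) - re (p.inner y y) := by
  rw [p.add_left, inner_sub_right, inner_sub_right, map_add, map_sub, map_sub,
    p.inner_re_symm y x]
  ring

theorem re_inner_ofReal_smul_self (x : F) (t : ℝ) :
    re (p.inner ((t : 𝕜) • x) ((t : 𝕜) • x)) = t ^ 2 * re (p.inner x x) := by
  rw [p.smul_left, inner_smul_right, conj_ofReal, ← mul_assoc, ← ofReal_mul, re_ofReal_mul, sq]

theorem im_inner_eq_neg_re_inner_I_smul (x y : F) :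
    im (p.inner x y) = -re (p.inner x ((I : 𝕜) • y)) := by
  rw [inner_smul_right, I_mul_re, neg_neg]

end

variable {p₁ p₂ : PreInnerProductSpace.Core 𝕜 F}

theorem re_inner_self_eq_of_re_inner_self_eq
    (h : ∀ x y, re (p₁.inner x y) = 0 → re (p₂.inner x y) = 0) {x y : F}
    (hxy : re (p₁.inner x x) = re (p₁.inner y y)) :
    re (p₂.inner x x) = re (p₂.inner y y) := by
  have := h (x + y) (x - y) (by rw [re_inner_add_sub, hxy, sub_self])
  rwa [re_inner_add_sub, sub_eq_zero] at this

theorem re_inner_self_mul_comm_of_re_inner_eq_zero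
    (h : ∀ x y, re (p₁.inner x y) = 0 → re (p₂.inner x y) = 0) (x y : F) :
    re (p₂.inner x x) * re (p₁.inner y y) = re (p₂.inner y y) * re (p₁.inner x x) := by
  have hx := Real.sq_sqrt (p₁.re_inner_nonneg x)
  have hy := Real.sq_sqrt (p₁.re_inner_nonneg y)
  -- rescale `x` and `y` to the common `p₁`-norm `‖x‖₁ ‖y‖₁`
  have key := re_inner_self_eq_of_re_inner_self_eq h
    (x := ((√(re (p₁.inner y y)) : ℝ) : 𝕜) • x) (y := ((√(re (p₁.inner x x)) : ℝ) : 𝕜) • y)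
    (by rw [re_inner_ofReal_smul_self, re_inner_ofReal_smul_self, hx, hy, mul_comm])
  rw [re_inner_ofReal_smul_self, re_inner_ofReal_smul_self, hx, hy] at key
  linear_combination key

theorem re_inner_eq_mul_of_re_inner_self_eq_mul {c : ℝ}
    (hc : ∀ x, re (p₂.inner x x) = c * re (p₁.inner x x)) (x y : F) :
    re (p₂.inner x y) = c * re (p₁.inner x y) := by
  have h₁ := re_inner_add_add_self p₁ x y
  have h₂ := re_inner_add_add_self p₂ x y
  rw [hc, hc x, hc y] at h₂
  linear_combination (c * h₁ - h₂) / 2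

theorem inner_eq_mul_of_re_inner_self_eq_mul {c : ℝ}
    (hc : ∀ x, re (p₂.inner x x) = c * re (p₁.inner x x)) (x y : F) :
    p₂.inner x y = (c : 𝕜) * p₁.inner x y := by
  apply RCLike.ext
  · rw [re_inner_eq_mul_of_re_inner_self_eq_mul hc, re_ofReal_mul]
  · rw [im_ofReal_mul, im_inner_eq_neg_re_inner_I_smul, im_inner_eq_neg_re_inner_I_smul,
      re_inner_eq_mul_of_re_inner_self_eq_mul hc, mul_neg]

end PreInnerProductSpace.Core

namespace InnerProductSpace.Core

variable {𝕜 F : Type*} [RCLike 𝕜] [AddCommGroup F] [Module 𝕜 F]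

theorem re_inner_self_pos (p : InnerProductSpace.Core 𝕜 F) {x : F} (hx : x ≠ 0) :
    0 < re (p.inner x x) := by
  refine (p.re_inner_nonneg x).lt_of_ne' fun h ↦ hx (p.definite x ?_)
  rw [← @inner_self_ofReal_re 𝕜 F _ _ _ p.toCore x, h, ofReal_zero]

variable {p₁ p₂ : InnerProductSpace.Core 𝕜 F}

theorem re_inner_eq_zero_of_angle_eq
    (h : ∀ x y : F, x ≠ 0 → y ≠ 0 →
      re (p₁.inner x y) / (√(re (p₁.inner x x)) * √(re (p₁.inner y y))) =
      re (p₂.inner x y) / (√(re (p₂.inner x x)) * √(re (p₂.inner y y))))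
    {x y : F} (hxy : re (p₁.inner x y) = 0) : re (p₂.inner x y) = 0 := by
  rcases eq_or_ne x 0 with rfl | hx
  · rw [PreInnerProductSpace.Core.inner_zero_left _ y, map_zero]
  rcases eq_or_ne y 0 with rfl | hy
  · rw [PreInnerProductSpace.Core.inner_zero_right _ x, map_zero]
  have hpos : 0 < √(re (p₂.inner x x)) * √(re (p₂.inner y y)) :=
    mul_pos (Real.sqrt_pos.2 (re_inner_self_pos p₂ hx)) (Real.sqrt_pos.2 (re_inner_self_pos p₂ hy))
  have := h x y hx hy
  rw [hxy, zero_div, eq_comm, div_eq_zero_iff] at this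
  exact this.resolve_right hpos.ne'

theorem exists_pos_re_inner_self_eq_mul
    (h : ∀ x y, re (p₁.inner x y) = 0 → re (p₂.inner x y) = 0) :
    ∃ c : ℝ, 0 < c ∧ ∀ x, re (p₂.inner x x) = c * re (p₁.inner x x) := by
  rcases subsingleton_or_nontrivial F with _ | _
  · refine ⟨1, one_pos, fun x ↦ ?_⟩
    rw [Subsingleton.elim x 0, PreInnerProductSpace.Core.inner_zero_left _ 0,
      PreInnerProductSpace.Core.inner_zero_left _ 0, map_zero, mul_zero]
  obtain ⟨v, hv⟩ := exists_ne (0 : F)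
  have hv₁ := re_inner_self_pos p₁ hv
  refine ⟨re (p₂.inner v v) / re (p₁.inner v v), div_pos (re_inner_self_pos p₂ hv) hv₁,
    fun x ↦ ?_⟩
  rw [div_mul_eq_mul_div, eq_div_iff hv₁.ne']
  exact PreInnerProductSpace.Core.re_inner_self_mul_comm_of_re_inner_eq_zero h x v

end InnerProductSpace.Core

/-- Two complex inner products defining the same (Euclidean) angles for all pairs of
nonzero vectors are conformal. -/
theorem stmt_12 {V : Type*} [AddCommGroup V] [Module ℂ V]
    (p₁ p₂ : InnerProductSpace.Core ℂ V)
    (h : ∀ x y : V, x ≠ 0 → y ≠ 0 →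
      (p₁.inner x y).re / (Real.sqrt (p₁.inner x x).re * Real.sqrt (p₁.inner y y).re) =
      (p₂.inner x y).re / (Real.sqrt (p₂.inner x x).re * Real.sqrt (p₂.inner y y).re)) :
    ∃ c : ℝ, 0 < c ∧ ∀ x y : V, p₂.inner x y = (c : ℂ) * p₁.inner x y := by
  have horth : ∀ x y, re (p₁.inner x y) = 0 → re (p₂.inner x y) = 0 :=
    fun _ _ ↦ InnerProductSpace.Core.re_inner_eq_zero_of_angle_eq h
  obtain ⟨c, hc, hq⟩ := InnerProductSpace.Core.exists_pos_re_inner_self_eq_mul horth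
  exact ⟨c, hc, PreInnerProductSpace.Core.inner_eq_mul_of_re_inner_self_eq_mul hq⟩
end
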